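/- arXiv:1306.0093 — 2 statements merged into one kernel-verified Lean document; each statement's English description precedes it below -/
import Mathlib

section
/- Let G be a graph with matching number m. Then for any 1 ≤ k ≤ m, the sum of the k largest signless Laplacian eigenvalues of G satisfies S⁺_k(G) ≤ 2e(G) − 2m + 2k. -/
open Matrix Polynomial

/-- Sum of the `k` largest entries of a finitely-indexed family of reals. -/
noncomputable def sumKLargest {V : Type*} [Fintype V] (v : V → ℝ) (k : ℕ) : ℝ :=
  (((Finset.univ.val.map v).toList.mergeSort (fun a b => decide (b ≤ a))).take k).sum

open Classical in
/-- The signless Laplacian matrix `Q(G) = D(G) + A(G)` of a simple graph. -/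
noncomputable def signlessLap {V : Type*} [Fintype V] [DecidableEq V]
    (G : SimpleGraph V) : Matrix V V ℝ :=
  G.degMatrix ℝ + G.adjMatrix ℝ

theorem signlessLap_isHermitian {V : Type*} [Fintype V] [DecidableEq V]
    (G : SimpleGraph V) : (signlessLap G).IsHermitian := by
  classical
  ext i j
  by_cases h : i = j
  · subst h; simp [signlessLap]
  · simp [signlessLap, Matrix.conjTranspose_apply, SimpleGraph.degMatrix,
      Matrix.diagonal_apply, h, Ne.symm h, SimpleGraph.adj_comm]

/-- `S⁺_k(G)`: the sum of the `k` largest signless Laplacian eigenvalues of `G`. -/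
noncomputable def Splus {V : Type*} [Fintype V] [DecidableEq V]
    (G : SimpleGraph V) (k : ℕ) : ℝ :=
  sumKLargest (signlessLap_isHermitian G).eigenvalues k

/-- `e(G)`: the number of edges of `G`. -/
noncomputable def numEdges {V : Type*} (G : SimpleGraph V) : ℕ := G.edgeSet.ncard


/-- The matching number of `G`: the maximum number of pairwise disjoint edges. -/
noncomputable def matchingNumber {V : Type*} [Fintype V] [DecidableEq V]
    (G : SimpleGraph V) : ℕ :=
  sSup {m | ∃ M : Finset (Sym2 V), ↑M ⊆ G.edgeSet ∧
    (M : Set (Sym2 V)).Pairwise (fun e f => ∀ v : V, ¬(v ∈ e ∧ v ∈ f)) ∧ M.card = m}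

/-!
The signless Laplacian is `N Nᵀ` for the vertex–edge incidence matrix `N`, so its eigenvalues are
nonnegative and sum to its trace `2 e(G)`. On the span of the indicator vectors of the `m` edges of
a maximum matching the quadratic form is at least twice the squared norm, so by the easy half of
Courant–Fischer at least `m` eigenvalues are `≥ 2`. Hence, whichever `k` eigenvalues are summed,
at least `m - k` of the remaining ones are `≥ 2`, and the rest are `≥ 0`.
-/

open Finset

namespace List

theorem mul_countP_le_sum (c : ℝ) {L : List ℝ} (hL : ∀ x ∈ L, 0 ≤ x) :
    c * L.countP (fun x => decide (c ≤ x)) ≤ L.sum := by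
  induction L with
  | nil => simp
  | cons a L ih =>
    have ha := hL a mem_cons_self
    have hL' := ih fun x hx => hL x (mem_cons_of_mem a hx)
    by_cases h : c ≤ a <;> simp [h] <;> linarith

theorem sum_take_add_mul_countP_sub_le {c : ℝ} (hc : 0 ≤ c) {L : List ℝ} (hL : ∀ x ∈ L, 0 ≤ x)
    (k : ℕ) :
    (L.take k).sum + c * ((L.countP (fun x => decide (c ≤ x)) - k : ℕ) : ℝ) ≤ L.sum := by
  have hcount : L.countP (fun x => decide (c ≤ x)) - k ≤
      (L.drop k).countP (fun x => decide (c ≤ x)) := by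
    have hsplit := countP_append (p := fun x => decide (c ≤ x)) (l₁ := L.take k) (l₂ := L.drop k)
    rw [take_append_drop] at hsplit
    have := (L.take k).countP_le_length (p := fun x => decide (c ≤ x))
    have := length_take_le k L
    omega
  have hdrop := mul_countP_le_sum c (L := L.drop k) fun x hx => hL x (mem_of_mem_drop hx)
  have : c * ((L.countP (fun x => decide (c ≤ x)) - k : ℕ) : ℝ) ≤
      c * ((L.drop k).countP (fun x => decide (c ≤ x)) : ℝ) := by gcongr
  linarith [sum_take_add_sum_drop L k]

end List

theorem sumKLargest_add_mul_card_sub_le {V : Type*} [Fintype V] {v : V → ℝ} (hv : ∀ i, 0 ≤ v i)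
    {c : ℝ} (hc : 0 ≤ c) (k : ℕ) :
    sumKLargest v k + c * ((#{i | c ≤ v i} - k : ℕ) : ℝ) ≤ ∑ i, v i := by
  set l := (univ.val.map v).toList
  have hperm : (l.mergeSort fun a b => decide (b ≤ a)).Perm l := List.mergeSort_perm _ _
  have hsum : l.sum = ∑ i, v i := by rw [Multiset.sum_toList]; rfl
  have hcount : l.countP (fun x => decide (c ≤ x)) = #{i | c ≤ v i} := by
    rw [← Multiset.coe_countP, Multiset.coe_toList, Multiset.countP_map]
    rfl
  have hnonneg : ∀ x ∈ l.mergeSort fun a b => decide (b ≤ a), 0 ≤ x := by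
    intro x hx
    obtain ⟨i, -, rfl⟩ := Multiset.mem_map.1 (Multiset.mem_toList.1 (hperm.subset hx))
    exact hv i
  have := List.sum_take_add_mul_countP_sub_le hc hnonneg k
  rwa [hperm.countP_eq, hcount, hperm.sum_eq, hsum] at this

namespace Matrix.IsHermitian

variable {n : Type*} [Fintype n] [DecidableEq n] {A : Matrix n n ℝ} (hA : A.IsHermitian)

theorem dotProduct_self_eq_sum_sq (x : n → ℝ) :
    x ⬝ᵥ x = ∑ i, ((star (hA.eigenvectorUnitary : Matrix n n ℝ) *ᵥ x) i) ^ 2 := by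
  set U := (hA.eigenvectorUnitary : Matrix n n ℝ)
  calc x ⬝ᵥ x = x ⬝ᵥ (U *ᵥ (star U *ᵥ x)) := by
        rw [mulVec_mulVec, Unitary.mul_star_self_of_mem hA.eigenvectorUnitary.2, one_mulVec]
    _ = _ := by
        rw [← dotProduct_transpose_mulVec, dotProduct, ← conjTranspose_eq_transpose_of_trivial,
          ← star_eq_conjTranspose]
        simp only [sq]

theorem dotProduct_mulVec_eq_sum_eigenvalues (x : n → ℝ) :
    x ⬝ᵥ (A *ᵥ x) =
      ∑ i, hA.eigenvalues i * ((star (hA.eigenvectorUnitary : Matrix n n ℝ) *ᵥ x) i) ^ 2 := by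
  set U := (hA.eigenvectorUnitary : Matrix n n ℝ)
  conv_lhs => rw [hA.spectral_theorem, Unitary.conjStarAlgAut_apply]
  rw [← mulVec_mulVec, ← mulVec_mulVec, ← dotProduct_transpose_mulVec, dotProduct,
    ← conjTranspose_eq_transpose_of_trivial, ← star_eq_conjTranspose]
  refine sum_congr rfl fun i _ => ?_
  rw [mulVec_diagonal]
  simp only [Function.comp_apply, RCLike.ofReal_real_eq_id, id]
  ring

theorem finrank_le_card_le_eigenvalues (c : ℝ) (W : Submodule ℝ (n → ℝ))
    (hW : ∀ x ∈ W, c * (x ⬝ᵥ x) ≤ x ⬝ᵥ (A *ᵥ x)) :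
    Module.finrank ℝ W ≤ #{i | c ≤ hA.eigenvalues i} := by
  set U := (hA.eigenvectorUnitary : Matrix n n ℝ)
  set S : Finset n := {i | c ≤ hA.eigenvalues i}
  let Φ : W →ₗ[ℝ] (S → ℝ) :=
    LinearMap.funLeft ℝ ℝ ((↑) : S → n) ∘ₗ (star U).mulVecLin ∘ₗ W.subtype
  suffices Function.Injective Φ by
    simpa [Module.finrank_fintype_fun_eq_card] using LinearMap.finrank_le_finrank_of_injective this
  -- The eigen-coordinates of `x ∈ W` outside `S` vanish, since `∑ i, (λ i - c) * y i ^ 2 ≥ 0`.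
  rw [← LinearMap.ker_eq_bot, Submodule.eq_bot_iff]
  rintro ⟨x, hx⟩ hΦ
  set y := star U *ᵥ x with hy
  have hyS : ∀ i ∈ S, y i = 0 := fun i hi => congrFun hΦ ⟨i, hi⟩
  have hterm : ∀ i ∈ univ, (hA.eigenvalues i - c) * y i ^ 2 ≤ 0 := by
    intro i _
    by_cases hi : i ∈ S
    · simp [hyS i hi]
    · have : hA.eigenvalues i < c := by simpa [S] using hi
      nlinarith [sq_nonneg (y i)]
  have hsum : ∑ i, (hA.eigenvalues i - c) * y i ^ 2 = 0 := by
    refine le_antisymm (sum_nonpos hterm) ?_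
    have := hW x hx
    rw [hA.dotProduct_self_eq_sum_sq, hA.dotProduct_mulVec_eq_sum_eigenvalues, mul_sum] at this
    simp only [sub_mul, sum_sub_distrib]
    linarith
  have hy0 : y = 0 := by
    funext i
    by_cases hi : i ∈ S
    · exact hyS i hi
    · have : hA.eigenvalues i - c ≠ 0 := by simp [S] at hi; linarith
      simpa [this] using (sum_eq_zero_iff_of_nonpos hterm).1 hsum i (mem_univ i)
  have : x = U *ᵥ y := by
    rw [hy, mulVec_mulVec, Unitary.mul_star_self_of_mem hA.eigenvectorUnitary.2, one_mulVec]
  simp [this, hy0]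

end Matrix.IsHermitian

namespace SimpleGraph

variable {V : Type*} [Fintype V] [DecidableEq V] (G : SimpleGraph V)

theorem signlessLap_eq_incMatrix_mul_transpose [DecidableRel G.Adj] :
    signlessLap G = G.incMatrix ℝ * (G.incMatrix ℝ)ᵀ := by
  rw [incMatrix_mul_transpose]
  ext a b
  by_cases hab : a = b
  · subst hab
    simp only [signlessLap, degMatrix, Matrix.add_apply, diagonal_apply_eq, adjMatrix_apply,
      SimpleGraph.irrefl, if_false, add_zero, of_apply, if_true]
    convert rfl
  · simp [signlessLap, degMatrix, hab, adjMatrix_apply]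

theorem signlessLap_posSemidef : (signlessLap G).PosSemidef := by
  classical
  rw [signlessLap_eq_incMatrix_mul_transpose, ← conjTranspose_eq_transpose_of_trivial]
  exact posSemidef_self_mul_conjTranspose _

theorem sum_eigenvalues_signlessLap :
    ∑ i, (signlessLap_isHermitian G).eigenvalues i = 2 * numEdges G := by
  classical
  have := (signlessLap_isHermitian G).trace_eq_sum_eigenvalues
  simp only [RCLike.ofReal_real_eq_id, id] at this
  rw [← this, signlessLap, trace_add, trace_adjMatrix, add_zero, degMatrix, trace_diagonal,
    ← Nat.cast_sum, sum_degrees_eq_twice_card_edges, numEdges, ← coe_edgeFinset,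
    Set.ncard_coe_finset]
  push_cast
  rfl

variable {G} {M : Finset (Sym2 V)}

theorem transpose_mul_incMatrix_submatrix_of_pairwise_disjoint [DecidableRel G.Adj]
    (hMG : ↑M ⊆ G.edgeSet)
    (hM : (M : Set (Sym2 V)).Pairwise (fun e f => ∀ v : V, ¬(v ∈ e ∧ v ∈ f))) :
    ((G.incMatrix ℝ).submatrix id ((↑) : M → Sym2 V))ᵀ *
      (G.incMatrix ℝ).submatrix id ((↑) : M → Sym2 V) = (2 : ℝ) • 1 := by
  rw [transpose_submatrix, ← submatrix_mul _ _ _ _ _ Function.bijective_id]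
  ext e f
  by_cases hef : e = f
  · subst hef
    simp [incMatrix_transpose_mul_diag, hMG e.2]
  · have hdisj := hM e.2 f.2 (Subtype.coe_ne_coe.2 hef)
    simp only [submatrix_apply, Matrix.mul_apply, transpose_apply, Matrix.smul_apply,
      one_apply_ne hef, smul_zero]
    refine Finset.sum_eq_zero fun v _ => ?_
    simp only [incMatrix_apply', mul_ite, mul_one, mul_zero, ite_eq_right_iff, one_ne_zero,
      imp_false]
    exact fun hf he => hdisj v ⟨he.2, hf.2⟩

theorem card_le_card_two_le_eigenvalues_signlessLap (hMG : ↑M ⊆ G.edgeSet)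
    (hM : (M : Set (Sym2 V)).Pairwise (fun e f => ∀ v : V, ¬(v ∈ e ∧ v ∈ f))) :
    #M ≤ #{i | 2 ≤ (signlessLap_isHermitian G).eigenvalues i} := by
  classical
  set N := G.incMatrix ℝ
  set B := N.submatrix id ((↑) : M → Sym2 V)
  have hBB : Bᵀ * B = (2 : ℝ) • 1 := transpose_mul_incMatrix_submatrix_of_pairwise_disjoint hMG hM
  have hBBc (c : M → ℝ) : Bᵀ *ᵥ (B *ᵥ c) = (2 : ℝ) • c := by
    rw [mulVec_mulVec, hBB, smul_mulVec, one_mulVec]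
  have hinj : Function.Injective B.mulVecLin := by
    intro c c' h
    have := congrArg (Bᵀ *ᵥ ·) h
    simp only [mulVecLin_apply, hBBc] at this
    exact smul_right_injective _ two_ne_zero this
  have hW : ∀ x ∈ LinearMap.range B.mulVecLin, 2 * (x ⬝ᵥ x) ≤ x ⬝ᵥ (signlessLap G *ᵥ x) := by
    rintro _ ⟨c, rfl⟩
    simp only [mulVecLin_apply]
    calc 2 * ((B *ᵥ c) ⬝ᵥ (B *ᵥ c)) = (Bᵀ *ᵥ (B *ᵥ c)) ⬝ᵥ (Bᵀ *ᵥ (B *ᵥ c)) := by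
          rw [← dotProduct_transpose_mulVec, hBBc]
          simp only [dotProduct_smul, smul_dotProduct, smul_eq_mul]
      _ ≤ (Nᵀ *ᵥ (B *ᵥ c)) ⬝ᵥ (Nᵀ *ᵥ (B *ᵥ c)) := by
          simp only [dotProduct, ← sq]
          exact (sum_coe_sort M fun e => (Nᵀ *ᵥ (B *ᵥ c)) e ^ 2).trans_le
            (sum_le_sum_of_subset_of_nonneg (subset_univ M) fun _ _ _ => sq_nonneg _)
      _ = (B *ᵥ c) ⬝ᵥ (signlessLap G *ᵥ (B *ᵥ c)) := by
          rw [signlessLap_eq_incMatrix_mul_transpose, ← mulVec_mulVec, dotProduct_comm,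
            ← dotProduct_transpose_mulVec, transpose_transpose]
  have := (signlessLap_isHermitian G).finrank_le_card_le_eigenvalues 2 _ hW
  rwa [LinearMap.finrank_range_of_inj hinj, Module.finrank_fintype_fun_eq_card,
    Fintype.card_coe] at this

theorem exists_finset_card_eq_matchingNumber :
    ∃ M : Finset (Sym2 V), ↑M ⊆ G.edgeSet ∧
      (M : Set (Sym2 V)).Pairwise (fun e f => ∀ v : V, ¬(v ∈ e ∧ v ∈ f)) ∧
      #M = matchingNumber G :=
  (Nat.sSup_mem ⟨0, ∅, by simp⟩
    ⟨Fintype.card (Sym2 V), by rintro _ ⟨M, -, -, rfl⟩; exact card_le_univ M⟩ :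
    matchingNumber G ∈ _)

end SimpleGraph

open SimpleGraph in
theorem splus_le_of_matchingNumber_general {V : Type*} [Fintype V] [DecidableEq V]
    (G : SimpleGraph V) (m : ℕ) (hm : matchingNumber G = m)
    (k : ℕ) (hkm : k ≤ m) :
    Splus G k ≤ 2 * (numEdges G : ℝ) - 2 * (m : ℝ) + 2 * k := by
  obtain ⟨M, hMG, hM, hMm⟩ := G.exists_finset_card_eq_matchingNumber
  have hcount : m ≤ #{i | 2 ≤ (signlessLap_isHermitian G).eigenvalues i} :=
    hm ▸ hMm ▸ card_le_card_two_le_eigenvalues_signlessLap hMG hM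
  have hsum := sumKLargest_add_mul_card_sub_le (signlessLap_posSemidef G).eigenvalues_nonneg
    zero_le_two k
  rw [sum_eigenvalues_signlessLap] at hsum
  have hmk : ((m - k : ℕ) : ℝ) ≤
      ((#{i | 2 ≤ (signlessLap_isHermitian G).eigenvalues i} - k : ℕ) : ℝ) := by
    exact_mod_cast Nat.sub_le_sub_right hcount k
  rw [Nat.cast_sub hkm] at hmk
  unfold Splus
  linarith

/-- If `G` has matching number `m`, then for any `1 ≤ k ≤ m`,
`S⁺_k(G) ≤ 2e(G) − 2m + 2k`. -/
theorem splus_le_of_matchingNumber {V : Type*} [Fintype V] [DecidableEq V]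
    (G : SimpleGraph V) (m : ℕ) (hm : matchingNumber G = m)
    (k : ℕ) (hk1 : 1 ≤ k) (hkm : k ≤ m) :
    Splus G k ≤ 2 * (numEdges G : ℝ) - 2 * (m : ℝ) + 2 * k :=
  splus_le_of_matchingNumber_general G m hm k hkm
end

section
/- Let G₁ and G₂ be nonempty connected graphs with n₁ and n₂ vertices respectively. Suppose S⁺_{k_i}(G_i) ≤ e(G_i) + k_i(k_i+1)/2 for all 1 ≤ k_i ≤ n_i and i = 1,2. Let G₁∼G₂ denote a graph obtained from the disjoint union G₁ ∪ G₂ by adding one edge between a vertex of G₁ and a vertex of G₂. Then for all 1 ≤ k ≤ n₁+n₂, S⁺_k(G₁∼G₂) ≤ e(G₁∼G₂) + k(k+1)/2. -/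
open Matrix Polynomial

/-- `G₁ ∼ G₂`: the graph obtained from the disjoint union of `G₁` and `G₂` by adding one
edge between the vertex `u` of `G₁` and the vertex `v` of `G₂`. -/
def connectGraphs {V₁ V₂ : Type*} (G₁ : SimpleGraph V₁) (G₂ : SimpleGraph V₂)
    (u : V₁) (v : V₂) : SimpleGraph (V₁ ⊕ V₂) where
  Adj x y := match x, y with
    | .inl a, .inl b => G₁.Adj a b
    | .inr a, .inr b => G₂.Adj a b
    | .inl a, .inr b => a = u ∧ b = v
    | .inr b, .inl a => a = u ∧ b = v
  symm := by
    constructor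
    rintro (a | a) (b | b) h
    · exact G₁.adj_symm h
    · exact h
    · exact h
    · exact G₂.adj_symm h
  loopless := by
    constructor
    rintro (a | a) h
    · exact G₁.irrefl h
    · exact G₂.irrefl h

/-!
Write `x` for the indicator vector of the two endpoints of the new edge. Then
`Q(G₁ ∼ G₂) = (Q(G₁) ⊕ Q(G₂)) + x xᵀ`. Ky Fan's inequality `S_k(A + B) ≤ S_k(A) + S_k(B)`
follows from the variational formula `S_k(M) = max tr(P M)` over orthogonal projections `P` of
rank `k`, and the rank-one term contributes at most `tr(x xᵀ) = 2`. The `k` largest eigenvalues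
of the block-diagonal part split as `k₁ + k₂ = k` between the blocks, so
`S⁺_k(G₁ ∼ G₂) ≤ S⁺_{k₁}(G₁) + S⁺_{k₂}(G₂) + 2`. If `k₁, k₂ ≥ 1`, the hypotheses finish the
proof because `k(k+1)/2 = k₁(k₁+1)/2 + k₂(k₂+1)/2 + k₁k₂`; if one of them is `0`, the edge of
the unused graph pays for the extra `1`.
-/

section SumKLargest

variable {ι κ : Type*} [Fintype ι] [Fintype κ]

theorem sumKLargest_eq_sum_take_sort (v : ι → ℝ) (k : ℕ) :
    sumKLargest v k = (((Finset.univ.val.map v).sort (· ≥ ·)).take k).sum := by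
  rw [sumKLargest, ← Multiset.coe_toList (Finset.univ.val.map v), Multiset.coe_sort,
    Multiset.coe_toList]

theorem sumKLargest_zero (v : ι → ℝ) : sumKLargest v 0 = 0 := by
  simp [sumKLargest]

theorem sumKLargest_congr {v : ι → ℝ} {w : κ → ℝ}
    (h : Finset.univ.val.map v = Finset.univ.val.map w) (k : ℕ) :
    sumKLargest v k = sumKLargest w k := by
  rw [sumKLargest_eq_sum_take_sort, sumKLargest_eq_sum_take_sort, h]

theorem sumKLargest_le_sum_of_nonneg {v : ι → ℝ} (hv : ∀ i, 0 ≤ v i) (k : ℕ) :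
    sumKLargest v k ≤ ∑ i, v i := by
  set L := (Finset.univ.val.map v).sort (· ≥ ·)
  have hL : L.sum = ∑ i, v i := by
    rw [← Multiset.sum_coe, Multiset.sort_eq]; rfl
  have hdrop : 0 ≤ (L.drop k).sum := List.sum_nonneg fun x hx => by
    obtain ⟨i, -, rfl⟩ := Multiset.mem_map.mp ((Multiset.mem_sort _).mp (List.mem_of_mem_drop hx))
    exact hv i
  rw [sumKLargest_eq_sum_take_sort, ← hL, ← L.take_append_drop k, List.sum_append]
  linarith

theorem exists_card_eq_sum_eq_sumKLargest [DecidableEq ι] (v : ι → ℝ) {k : ℕ}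
    (hk : k ≤ Fintype.card ι) :
    ∃ s : Finset ι, s.card = k ∧ (∀ i ∈ s, ∀ j ∉ s, v j ≤ v i) ∧
      ∑ i ∈ s, v i = sumKLargest v k := by
  set I := Finset.univ.toList.mergeSort (fun i j => decide (v j ≤ v i))
  have hperm : I.Perm Finset.univ.toList := List.mergeSort_perm _ _
  have hsorted : I.Pairwise (fun i j => v j ≤ v i) := by
    simpa using List.pairwise_mergeSort (le := fun i j => decide (v j ≤ v i))
      (fun a b c hab hbc => by simp only [decide_eq_true_eq] at *; linarith)
      (fun a b => by simpa using le_total (v b) (v a)) Finset.univ.toList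
  have hnodup : I.Nodup := hperm.nodup_iff.mpr (Finset.nodup_toList _)
  have hlen : I.length = Fintype.card ι := by simp [hperm.length_eq]
  have hvals : I.map v = (Finset.univ.val.map v).sort (· ≥ ·) := by
    refine List.Perm.eq_of_pairwise' (List.pairwise_map.mpr hsorted) (Multiset.pairwise_sort _ _)
      (Multiset.coe_eq_coe.mp ?_)
    rw [Multiset.sort_eq, ← Multiset.map_coe, Multiset.coe_eq_coe.mpr hperm, Finset.coe_toList]
  refine ⟨(I.take k).toFinset, ?_, ?_, ?_⟩
  · rw [List.toFinset_card_of_nodup (hnodup.sublist (List.take_sublist _ _)), List.length_take,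
      hlen, min_eq_left hk]
  · intro i hi j hj
    have hsplit := I.take_append_drop k ▸ hsorted
    refine (List.pairwise_append.mp hsplit).2.2 i (List.mem_toFinset.mp hi) j ?_
    have hjI : j ∈ I := hperm.mem_iff.mpr (Finset.mem_toList.mpr (Finset.mem_univ j))
    rw [← I.take_append_drop k, List.mem_append] at hjI
    exact hjI.resolve_left (fun h => hj (List.mem_toFinset.mpr h))
  · rw [List.sum_toFinset _ (hnodup.sublist (List.take_sublist _ _)),
      sumKLargest_eq_sum_take_sort, ← hvals, List.map_take]

theorem sum_mul_le_sum_of_forall_le [DecidableEq ι] {v d : ι → ℝ} {s : Finset ι}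
    (hs : ∀ i ∈ s, ∀ j ∉ s, v j ≤ v i) (hd0 : ∀ i, 0 ≤ d i) (hd1 : ∀ i, d i ≤ 1)
    (hd : ∑ i, d i = s.card) :
    ∑ i, d i * v i ≤ ∑ i ∈ s, v i := by
  rcases s.eq_empty_or_nonempty with rfl | hne
  · have hzero := (Finset.sum_eq_zero_iff_of_nonneg fun i _ => hd0 i).mp (by simpa using hd)
    simp [hzero]
  -- `t` separates the values on `s` from those off `s`, so each term below is `≤ 0`
  set t := s.inf' hne v
  have hexchange : ∑ i, d i * v i - ∑ i ∈ s, v i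
      = ∑ i, (d i - if i ∈ s then 1 else 0) * (v i - t) := by
    simp only [sub_mul, mul_sub, ite_mul, one_mul, zero_mul, Finset.sum_sub_distrib,
      ← Finset.sum_mul, Finset.sum_ite_mem, Finset.univ_inter, Finset.sum_const, nsmul_eq_mul, hd]
    ring
  have hterm : ∀ i, (d i - if i ∈ s then 1 else 0) * (v i - t) ≤ 0 := by
    intro i
    by_cases hi : i ∈ s
    · rw [if_pos hi]
      exact mul_nonpos_of_nonpos_of_nonneg (by linarith [hd1 i])
        (sub_nonneg.mpr (Finset.inf'_le v hi))
    · rw [if_neg hi, sub_zero]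
      exact mul_nonpos_of_nonneg_of_nonpos (hd0 i)
        (sub_nonpos.mpr (Finset.le_inf' hne v fun j hj => hs j hj i hi))
  linarith [Finset.sum_nonpos fun i (_ : i ∈ Finset.univ) => hterm i]

theorem sum_mul_le_sumKLargest {v d : ι → ℝ} (hd0 : ∀ i, 0 ≤ d i) (hd1 : ∀ i, d i ≤ 1)
    {k : ℕ} (hd : ∑ i, d i = k) :
    ∑ i, d i * v i ≤ sumKLargest v k := by
  classical
  have hk : k ≤ Fintype.card ι := by
    have : (k : ℝ) ≤ Fintype.card ι := by
      simpa [← hd] using Finset.sum_le_sum fun i (_ : i ∈ Finset.univ) => hd1 i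
    exact_mod_cast this
  obtain ⟨s, hcard, hs, hsum⟩ := exists_card_eq_sum_eq_sumKLargest v hk
  exact hsum ▸ sum_mul_le_sum_of_forall_le hs hd0 hd1 (hcard ▸ hd)

theorem Finset.sum_le_sumKLargest (s : Finset ι) (v : ι → ℝ) :
    ∑ i ∈ s, v i ≤ sumKLargest v s.card := by
  classical
  have h := sum_mul_le_sumKLargest (v := v) (d := fun i => if i ∈ s then 1 else 0) (k := s.card)
    (fun i => by positivity) (fun i => by split_ifs <;> norm_num) (by simp)
  simpa [ite_mul, Finset.sum_ite_mem] using h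

theorem exists_sumKLargest_sumElim_le (f : ι → ℝ) (g : κ → ℝ) {k : ℕ}
    (hk : k ≤ Fintype.card ι + Fintype.card κ) :
    ∃ k₁ ≤ Fintype.card ι, ∃ k₂ ≤ Fintype.card κ, k₁ + k₂ = k ∧
      sumKLargest (Sum.elim f g) k ≤ sumKLargest f k₁ + sumKLargest g k₂ := by
  classical
  obtain ⟨s, hcard, -, hsum⟩ :=
    exists_card_eq_sum_eq_sumKLargest (Sum.elim f g) (k := k) (by simpa using hk)
  refine ⟨s.toLeft.card, Finset.card_le_univ _, s.toRight.card, Finset.card_le_univ _, ?_, ?_⟩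
  · rw [← hcard, ← Finset.card_disjSum, Finset.toLeft_disjSum_toRight]
  · have hsplit := Finset.sum_disjSum s.toLeft s.toRight (Sum.elim f g)
    rw [Finset.toLeft_disjSum_toRight] at hsplit
    rw [← hsum, hsplit]
    exact add_le_add (s.toLeft.sum_le_sumKLargest f) (s.toRight.sum_le_sumKLargest g)

end SumKLargest

namespace Matrix

open Unitary

variable {n : Type*} [Fintype n]

theorem trace_fromBlocks {m R : Type*} [Fintype m] [AddCommMonoid R]
    (A : Matrix n n R) (B : Matrix n m R) (C : Matrix m n R) (D : Matrix m m R) :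
    (fromBlocks A B C D).trace = A.trace + D.trace := by
  simp [trace, Fintype.sum_sum_type]

theorem _root_.IsStarProjection.posSemidef {R : Type*} [CommRing R] [PartialOrder R] [StarRing R]
    [StarOrderedRing R] {P : Matrix n n R} (hP : IsStarProjection P) : P.PosSemidef := by
  have hP' : P = Pᴴ * P := by rw [← star_eq_conjTranspose, hP.isSelfAdjoint.star_eq,
    hP.isIdempotentElem.eq]
  exact hP' ▸ posSemidef_conjTranspose_mul_self P

variable [DecidableEq n]

theorem _root_.IsStarProjection.apply_self_mem_Icc {R : Type*} [CommRing R] [PartialOrder R]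
    [StarRing R] [StarOrderedRing R] {P : Matrix n n R} (hP : IsStarProjection P) (i : n) :
    P i i ∈ Set.Icc 0 1 := by
  have h := hP.one_sub.posSemidef.diag_nonneg (i := i)
  rw [sub_apply, one_apply_eq, sub_nonneg] at h
  exact ⟨hP.posSemidef.diag_nonneg, h⟩

theorem trace_conjStarAlgAut {R : Type*} [CommRing R] [StarRing R] (U : unitary (Matrix n n R))
    (X : Matrix n n R) : (conjStarAlgAut R _ U X).trace = X.trace := by
  rw [conjStarAlgAut_apply, trace_mul_cycle, Unitary.coe_star_mul_self, one_mul]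

theorem trace_mul_diagonal {R : Type*} [CommRing R] (X : Matrix n n R) (d : n → R) :
    (X * diagonal d).trace = ∑ i, X i i * d i := by
  simp [trace, mul_diagonal]

variable {M P : Matrix n n ℝ}

theorem IsHermitian.trace_mul_eq_sum (hM : M.IsHermitian) (P : Matrix n n ℝ) :
    (P * M).trace
      = ∑ i, conjStarAlgAut ℝ _ (star hM.eigenvectorUnitary) P i i * hM.eigenvalues i := by
  rw [← trace_conjStarAlgAut (star hM.eigenvectorUnitary), map_mul,
    hM.conjStarAlgAut_star_eigenvectorUnitary, RCLike.ofReal_real_eq_id, Function.id_comp,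
    trace_mul_diagonal]

theorem IsHermitian.trace_mul_le_sumKLargest (hM : M.IsHermitian) (hP : IsStarProjection P)
    {k : ℕ} (hk : P.trace = k) :
    (P * M).trace ≤ sumKLargest hM.eigenvalues k := by
  set N := conjStarAlgAut ℝ _ (star hM.eigenvectorUnitary) P
  have hN : IsStarProjection N := hP.map _
  rw [hM.trace_mul_eq_sum]
  refine sum_mul_le_sumKLargest (fun i => (hN.apply_self_mem_Icc i).1)
    (fun i => (hN.apply_self_mem_Icc i).2) ?_
  rw [← hk, ← trace_conjStarAlgAut (star hM.eigenvectorUnitary) P]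
  rfl

theorem IsHermitian.exists_trace_mul_eq_sumKLargest (hM : M.IsHermitian) {k : ℕ}
    (hk : k ≤ Fintype.card n) :
    ∃ P : Matrix n n ℝ, IsStarProjection P ∧ P.trace = k ∧
      (P * M).trace = sumKLargest hM.eigenvalues k := by
  obtain ⟨s, hcard, -, hsum⟩ := exists_card_eq_sum_eq_sumKLargest hM.eigenvalues hk
  set D : Matrix n n ℝ := diagonal fun i => if i ∈ s then 1 else 0
  have hD : IsStarProjection D := by
    refine ⟨?_, ?_⟩
    · rw [IsIdempotentElem, diagonal_mul_diagonal]
      congr 1; ext i; split_ifs <;> norm_num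
    · rw [IsSelfAdjoint, star_eq_conjTranspose, diagonal_conjTranspose, star_trivial]
  refine ⟨conjStarAlgAut ℝ _ hM.eigenvectorUnitary D, hD.map _, ?_, ?_⟩
  · rw [trace_conjStarAlgAut, trace_diagonal, Finset.sum_boole, Finset.filter_mem_eq_inter,
      Finset.univ_inter, hcard]
  · rw [hM.trace_mul_eq_sum, ← hsum, ← conjStarAlgAut_symm, StarAlgEquiv.symm_apply_apply]
    simp [D, Finset.sum_ite_mem]

variable {m : Type*} [Fintype m] [DecidableEq m]

/-- Ky Fan's inequality. -/
theorem IsHermitian.sumKLargest_eigenvalues_add_le {A B : Matrix n n ℝ} (hA : A.IsHermitian)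
    (hB : B.IsHermitian) (hAB : (A + B).IsHermitian) {k : ℕ} (hk : k ≤ Fintype.card n) :
    sumKLargest hAB.eigenvalues k
      ≤ sumKLargest hA.eigenvalues k + sumKLargest hB.eigenvalues k := by
  obtain ⟨P, hP, htr, hPAB⟩ := hAB.exists_trace_mul_eq_sumKLargest hk
  rw [← hPAB, mul_add, trace_add]
  exact add_le_add (hA.trace_mul_le_sumKLargest hP htr) (hB.trace_mul_le_sumKLargest hP htr)

theorem PosSemidef.sumKLargest_eigenvalues_le_trace {B : Matrix n n ℝ} (hB : B.PosSemidef)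
    (k : ℕ) : sumKLargest hB.isHermitian.eigenvalues k ≤ B.trace := by
  rw [hB.isHermitian.trace_eq_sum_eigenvalues]
  exact sumKLargest_le_sum_of_nonneg hB.eigenvalues_nonneg k

theorem IsHermitian.map_eigenvalues_fromBlocks {A : Matrix n n ℝ} {B : Matrix m m ℝ}
    (hA : A.IsHermitian) (hB : B.IsHermitian) (hAB : (Matrix.fromBlocks A 0 0 B).IsHermitian) :
    Finset.univ.val.map hAB.eigenvalues
      = Finset.univ.val.map (Sum.elim hA.eigenvalues hB.eigenvalues) := by
  have h := hAB.roots_charpoly_eq_eigenvalues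
  rw [charpoly_fromBlocks_zero₁₂, Polynomial.roots_mul (mul_ne_zero A.charpoly_monic.ne_zero
    B.charpoly_monic.ne_zero), hA.roots_charpoly_eq_eigenvalues,
    hB.roots_charpoly_eq_eigenvalues] at h
  simp only [RCLike.ofReal_real_eq_id, Function.id_comp] at h
  rw [← h, ← Finset.univ_disjSum_univ, Finset.val_disjSum, Multiset.disjSum, Multiset.map_add,
    Multiset.map_map, Multiset.map_map]
  rfl

end Matrix

namespace SimpleGraph

theorem trace_signlessLap {V : Type*} [Fintype V] [DecidableEq V] (G : SimpleGraph V) :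
    (signlessLap G).trace = 2 * numEdges G := by
  classical
  rw [signlessLap, trace_add, trace_adjMatrix, add_zero, degMatrix, trace_diagonal,
    ← Nat.cast_sum, sum_degrees_eq_twice_card_edges, numEdges, ← coe_edgeFinset,
    Set.ncard_coe_finset]
  push_cast
  rfl

theorem splus_zero {V : Type*} [Fintype V] [DecidableEq V] (G : SimpleGraph V) : Splus G 0 = 0 :=
  sumKLargest_zero _

variable {V₁ V₂ : Type*} (G₁ : SimpleGraph V₁) (G₂ : SimpleGraph V₂) (u : V₁) (v : V₂)

@[simp]
theorem connectGraphs_adj_inl_inl (a b : V₁) :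
    (connectGraphs G₁ G₂ u v).Adj (.inl a) (.inl b) ↔ G₁.Adj a b := .rfl

@[simp]
theorem connectGraphs_adj_inr_inr (a b : V₂) :
    (connectGraphs G₁ G₂ u v).Adj (.inr a) (.inr b) ↔ G₂.Adj a b := .rfl

@[simp]
theorem connectGraphs_adj_inl_inr (a : V₁) (b : V₂) :
    (connectGraphs G₁ G₂ u v).Adj (.inl a) (.inr b) ↔ a = u ∧ b = v := .rfl

@[simp]
theorem connectGraphs_adj_inr_inl (a : V₁) (b : V₂) :
    (connectGraphs G₁ G₂ u v).Adj (.inr b) (.inl a) ↔ a = u ∧ b = v := .rfl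

variable [Fintype V₁] [Fintype V₂]

open Classical in
theorem degree_connectGraphs_inl [DecidableEq V₁] (a : V₁) :
    (connectGraphs G₁ G₂ u v).degree (.inl a) = G₁.degree a + if a = u then 1 else 0 := by
  have h : (connectGraphs G₁ G₂ u v).neighborFinset (.inl a)
      = (G₁.neighborFinset a).disjSum (if a = u then {v} else ∅) := by
    ext (b | b) <;> by_cases ha : a = u <;> simp [ha]
  rw [← card_neighborFinset_eq_degree, h, Finset.card_disjSum, card_neighborFinset_eq_degree]
  split_ifs <;> rfl

open Classical in
theorem degree_connectGraphs_inr [DecidableEq V₂] (b : V₂) :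
    (connectGraphs G₁ G₂ u v).degree (.inr b) = G₂.degree b + if b = v then 1 else 0 := by
  have h : (connectGraphs G₁ G₂ u v).neighborFinset (.inr b)
      = (if b = v then ({u} : Finset V₁) else ∅).disjSum (G₂.neighborFinset b) := by
    ext (a | a) <;> by_cases hb : b = v <;> simp [hb]
  rw [← card_neighborFinset_eq_degree, h, Finset.card_disjSum, card_neighborFinset_eq_degree,
    add_comm]
  split_ifs <;> rfl

variable [DecidableEq V₁] [DecidableEq V₂]

theorem sumElim_single_dotProduct_self :
    (Sum.elim (Pi.single u 1) (Pi.single v 1) : V₁ ⊕ V₂ → ℝ) ⬝ᵥ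
      Sum.elim (Pi.single u 1) (Pi.single v 1) = 2 := by
  simp [dotProduct, Fintype.sum_sum_type, Pi.single_apply]
  norm_num

theorem signlessLap_connectGraphs :
    signlessLap (connectGraphs G₁ G₂ u v) = fromBlocks (signlessLap G₁) 0 0 (signlessLap G₂)
      + vecMulVec (Sum.elim (Pi.single u 1) (Pi.single v 1))
        (Sum.elim (Pi.single u 1) (Pi.single v 1)) := by
  classical
  ext (a | a) (b | b)
  all_goals
    simp [signlessLap, degMatrix, diagonal_apply, degree_connectGraphs_inl,
      degree_connectGraphs_inr, vecMulVec_apply, Pi.single_apply]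
    split_ifs <;> simp_all

theorem numEdges_connectGraphs :
    numEdges (connectGraphs G₁ G₂ u v) = numEdges G₁ + numEdges G₂ + 1 := by
  have h := congrArg trace (signlessLap_connectGraphs G₁ G₂ u v)
  rw [trace_add, trace_fromBlocks, trace_vecMulVec, sumElim_single_dotProduct_self,
    trace_signlessLap, trace_signlessLap, trace_signlessLap] at h
  exact_mod_cast (by linarith :
    (numEdges (connectGraphs G₁ G₂ u v) : ℝ) = numEdges G₁ + numEdges G₂ + 1)

theorem exists_splus_connectGraphs_le {k : ℕ} (hk : k ≤ Fintype.card V₁ + Fintype.card V₂) :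
    ∃ k₁ ≤ Fintype.card V₁, ∃ k₂ ≤ Fintype.card V₂, k₁ + k₂ = k ∧
      Splus (connectGraphs G₁ G₂ u v) k ≤ Splus G₁ k₁ + Splus G₂ k₂ + 2 := by
  set x : V₁ ⊕ V₂ → ℝ := Sum.elim (Pi.single u 1) (Pi.single v 1)
  have hQ₁ := signlessLap_isHermitian G₁
  have hQ₂ := signlessLap_isHermitian G₂
  have hblocks : (fromBlocks (signlessLap G₁) 0 0 (signlessLap G₂)).IsHermitian :=
    IsHermitian.fromBlocks hQ₁ (by simp) hQ₂
  have hx : (vecMulVec x x).PosSemidef := by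
    simpa using posSemidef_vecMulVec_self_star x
  obtain ⟨k₁, hk₁, k₂, hk₂, hsum, hsplit⟩ :=
    exists_sumKLargest_sumElim_le hQ₁.eigenvalues hQ₂.eigenvalues hk
  refine ⟨k₁, hk₁, k₂, hk₂, hsum, ?_⟩
  have hkyFan := hblocks.sumKLargest_eigenvalues_add_le hx.isHermitian
    (hblocks.add hx.isHermitian) (k := k) (by simpa using hk)
  have hrank1 := hx.sumKLargest_eigenvalues_le_trace k
  rw [trace_vecMulVec, sumElim_single_dotProduct_self] at hrank1
  rw [sumKLargest_congr (hQ₁.map_eigenvalues_fromBlocks hQ₂ hblocks)] at hkyFan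
  have hconn : Splus (connectGraphs G₁ G₂ u v) k
      = sumKLargest (hblocks.add hx.isHermitian).eigenvalues k := by
    unfold Splus
    congr 2
    exact signlessLap_connectGraphs G₁ G₂ u v
  rw [hconn]
  unfold Splus
  linarith

end SimpleGraph

theorem splus_le_connectGraphs_general {n₁ n₂ : ℕ} (G₁ : SimpleGraph (Fin n₁))
    (G₂ : SimpleGraph (Fin n₂))
    (hne₁ : 1 ≤ numEdges G₁) (hne₂ : 1 ≤ numEdges G₂)
    (h₁ : ∀ k₁ : ℕ, 1 ≤ k₁ → k₁ ≤ n₁ → Splus G₁ k₁ ≤ (numEdges G₁ : ℝ) + k₁ * (k₁ + 1) / 2)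
    (h₂ : ∀ k₂ : ℕ, 1 ≤ k₂ → k₂ ≤ n₂ → Splus G₂ k₂ ≤ (numEdges G₂ : ℝ) + k₂ * (k₂ + 1) / 2)
    (u : Fin n₁) (v : Fin n₂) (k : ℕ) (hk1 : 1 ≤ k) (hkn : k ≤ n₁ + n₂) :
    Splus (connectGraphs G₁ G₂ u v) k ≤
      (numEdges (connectGraphs G₁ G₂ u v) : ℝ) + k * (k + 1) / 2 := by
  obtain ⟨k₁, hk₁, k₂, hk₂, rfl, hsplit⟩ :=
    SimpleGraph.exists_splus_connectGraphs_le G₁ G₂ u v (k := k) (by simpa using hkn)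
  simp only [Fintype.card_fin] at hk₁ hk₂
  have he₁ : (1 : ℝ) ≤ numEdges G₁ := by exact_mod_cast hne₁
  have he₂ : (1 : ℝ) ≤ numEdges G₂ := by exact_mod_cast hne₂
  rw [SimpleGraph.numEdges_connectGraphs]
  push_cast
  rcases Nat.eq_zero_or_pos k₁ with rfl | hpos₁
  · have := h₂ k₂ (by simpa using hk1) hk₂
    rw [SimpleGraph.splus_zero] at hsplit
    push_cast
    linarith
  rcases Nat.eq_zero_or_pos k₂ with rfl | hpos₂
  · have := h₁ k₁ (by simpa using hk1) hk₁
    rw [SimpleGraph.splus_zero] at hsplit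
    push_cast
    linarith
  have hcross : (1 : ℝ) ≤ k₁ * k₂ := by exact_mod_cast Nat.one_le_iff_ne_zero.mpr (by positivity)
  linarith [h₁ k₁ hpos₁ hk₁, h₂ k₂ hpos₂ hk₂]

/-- If the nonempty connected graphs `G₁, G₂` satisfy `S⁺_k(Gᵢ) ≤ e(Gᵢ) + kᵢ(kᵢ+1)/2`
for all `1 ≤ kᵢ ≤ nᵢ`, then `G₁ ∼ G₂` satisfies `S⁺_k ≤ e + k(k+1)/2` for all
`1 ≤ k ≤ n₁ + n₂`. -/
theorem splus_le_connectGraphs {n₁ n₂ : ℕ} (G₁ : SimpleGraph (Fin n₁))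
    (G₂ : SimpleGraph (Fin n₂)) (hc₁ : G₁.Connected) (hc₂ : G₂.Connected)
    (hne₁ : 1 ≤ numEdges G₁) (hne₂ : 1 ≤ numEdges G₂)
    (h₁ : ∀ k₁ : ℕ, 1 ≤ k₁ → k₁ ≤ n₁ → Splus G₁ k₁ ≤ (numEdges G₁ : ℝ) + k₁ * (k₁ + 1) / 2)
    (h₂ : ∀ k₂ : ℕ, 1 ≤ k₂ → k₂ ≤ n₂ → Splus G₂ k₂ ≤ (numEdges G₂ : ℝ) + k₂ * (k₂ + 1) / 2)
    (u : Fin n₁) (v : Fin n₂) (k : ℕ) (hk1 : 1 ≤ k) (hkn : k ≤ n₁ + n₂) :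
    Splus (connectGraphs G₁ G₂ u v) k ≤
      (numEdges (connectGraphs G₁ G₂ u v) : ℝ) + k * (k + 1) / 2 :=
  splus_le_connectGraphs_general G₁ G₂ hne₁ hne₂ h₁ h₂ u v k hk1 hkn
end
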